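/- Define U := (c₁(V₁) × c₂(V₂)) + {(s v, t v) : v ∈ T} ⊆ W × W and R := (c₁(pT L₁) × c₂(pT L₂)) + {(s v, t v) : v ∈ T} ⊆ W × W, with annihilators U°, R° ⊆ W* × W*; M := {((v₁,α₁), v₀, (v₂,α₂)) : (v₁,α₁) ∈ L₁, (v₂,α₂) ∈ L₂, v₀ ∈ T, c₁ v₁ = s v₀, c₂ v₂ = t v₀}; and S := p₁*L₁ + p₂*L₂ ⊆ V × V*, the sum of the pullbacks of L₁ and L₂ along the projections p₁ : V → V₁ and p₂ : V → V₂ (where pᵢ*Lᵢ := {(v, αᵢ∘pᵢ) : v ∈ V, (pᵢ v, αᵢ) ∈ Lᵢ} and N₁ + N₂ := {(v, γ₁+γ₂) : (v,γ₁) ∈ N₁, (v,γ₂) ∈ N₂}). Then the sequence 0 → U° → R° → M → S → 0 is exact, where the first map is the inclusion, the second sends (ξ,η) to ((0, ξ∘c₁), 0, (0, η∘c₂)), and the third sends ((v₁,α₁), v₀, (v₂,α₂)) to ((v₁,v₀,v₂), (α₁ ⊕ 0 ⊕ α₂)|_V); in particular for every (ξ,η) ∈ R° one has (0, ξ∘c₁)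 ∈ L₁, (0, η∘c₂) ∈ L₂ and ξ∘s + η∘t = 0. (Linear core of the smoothness criterion for the Dirac structure on the homotopy fibre product of two 1-coisotropics.) -/
import Mathlib


/-- A subspace `L ⊆ V × V*` is Lagrangian if it equals its orthogonal
complement with respect to the symmetric pairing
`⟨(v,α),(w,β)⟩ = α(w) + β(v)`. -/
def IsLagrangian {V : Type*} [AddCommGroup V] [Module ℝ V]
    (L : Submodule ℝ (V × Module.Dual ℝ V)) : Prop :=
  ∀ x : V × Module.Dual ℝ V, x ∈ L ↔ ∀ y ∈ L, x.2 y.1 + y.2 x.1 = 0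

variable {V₁ V₂ T W : Type*} [AddCommGroup V₁] [Module ℝ V₁]
  [AddCommGroup V₂] [Module ℝ V₂] [AddCommGroup T] [Module ℝ T]
  [AddCommGroup W] [Module ℝ W]

/-- The homotopy fibre product
`V = {(v₁,v₀,v₂) ∈ V₁ × T × V₂ : c₁ v₁ = s v₀ and c₂ v₂ = t v₀}`. -/
def fibV (c₁ : V₁ →ₗ[ℝ] W) (c₂ : V₂ →ₗ[ℝ] W) (s t : T →ₗ[ℝ] W) :
    Submodule ℝ (V₁ × T × V₂) where
  carrier := {p | c₁ p.1 = s p.2.1 ∧ c₂ p.2.2 = t p.2.1}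
  add_mem' := by
    rintro a b ⟨ha1, ha2⟩ ⟨hb1, hb2⟩
    refine ⟨?_, ?_⟩ <;>
      simp only [Prod.fst_add, Prod.snd_add, map_add, ha1, ha2, hb1, hb2]
  zero_mem' := by simp
  smul_mem' := by
    rintro r a ⟨ha1, ha2⟩
    refine ⟨?_, ?_⟩ <;>
      simp only [Prod.smul_fst, Prod.smul_snd, map_smul, ha1, ha2]

/-- The projection `p₁ : V → V₁`. -/
def projV₁ (c₁ : V₁ →ₗ[ℝ] W) (c₂ : V₂ →ₗ[ℝ] W) (s t : T →ₗ[ℝ] W) :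
    ↥(fibV c₁ c₂ s t) →ₗ[ℝ] V₁ :=
  LinearMap.fst ℝ V₁ (T × V₂) ∘ₗ (fibV c₁ c₂ s t).subtype

/-- The projection `p₂ : V → V₂`. -/
def projV₂ (c₁ : V₁ →ₗ[ℝ] W) (c₂ : V₂ →ₗ[ℝ] W) (s t : T →ₗ[ℝ] W) :
    ↥(fibV c₁ c₂ s t) →ₗ[ℝ] V₂ :=
  LinearMap.snd ℝ T V₂ ∘ₗ LinearMap.snd ℝ V₁ (T × V₂) ∘ₗ (fibV c₁ c₂ s t).subtype

/-- Membership in `S = p₁*L₁ + p₂*L₂ ⊆ V × V*`, the sum of the pullbacks of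
`L₁` and `L₂` along the projections of the homotopy fibre product. -/
def memS (c₁ : V₁ →ₗ[ℝ] W) (c₂ : V₂ →ₗ[ℝ] W) (s t : T →ₗ[ℝ] W)
    (L₁ : Submodule ℝ (V₁ × Module.Dual ℝ V₁))
    (L₂ : Submodule ℝ (V₂ × Module.Dual ℝ V₂))
    (v : ↥(fibV c₁ c₂ s t)) (γ : Module.Dual ℝ ↥(fibV c₁ c₂ s t)) : Prop :=
  ∃ (α₁ : Module.Dual ℝ V₁) (α₂ : Module.Dual ℝ V₂),
    (projV₁ c₁ c₂ s t v, α₁) ∈ L₁ ∧ (projV₂ c₁ c₂ s t v, α₂) ∈ L₂ ∧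
    γ = α₁ ∘ₗ projV₁ c₁ c₂ s t + α₂ ∘ₗ projV₂ c₁ c₂ s t

/-- Membership in the annihilator `U°` of
`U = (c₁(V₁) × c₂(V₂)) + {(s v, t v) : v ∈ T} ⊆ W × W`. -/
def memUann (c₁ : V₁ →ₗ[ℝ] W) (c₂ : V₂ →ₗ[ℝ] W) (s t : T →ₗ[ℝ] W)
    (ξ η : Module.Dual ℝ W) : Prop :=
  ∀ w w' : W, (∃ (v₁ : V₁) (v₂ : V₂) (v₀ : T),
      w = c₁ v₁ + s v₀ ∧ w' = c₂ v₂ + t v₀) → ξ w + η w' = 0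

/-- Membership in the annihilator `R°` of
`R = (c₁(pT L₁) × c₂(pT L₂)) + {(s v, t v) : v ∈ T} ⊆ W × W`. -/
def memRann (c₁ : V₁ →ₗ[ℝ] W) (c₂ : V₂ →ₗ[ℝ] W) (s t : T →ₗ[ℝ] W)
    (L₁ : Submodule ℝ (V₁ × Module.Dual ℝ V₁))
    (L₂ : Submodule ℝ (V₂ × Module.Dual ℝ V₂)) (ξ η : Module.Dual ℝ W) : Prop :=
  ∀ w w' : W, (∃ (v₁ : V₁) (α₁ : Module.Dual ℝ V₁) (v₂ : V₂)
      (α₂ : Module.Dual ℝ V₂) (v₀ : T),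
      (v₁, α₁) ∈ L₁ ∧ (v₂, α₂) ∈ L₂ ∧
      w = c₁ v₁ + s v₀ ∧ w' = c₂ v₂ + t v₀) → ξ w + η w' = 0


lemma dual_factor {A B : Type*} [AddCommGroup A] [Module ℝ A]
    [AddCommGroup B] [Module ℝ B]
    (f : A →ₗ[ℝ] B) (g : A →ₗ[ℝ] ℝ) (hker : ∀ a, f a = 0 → g a = 0) :
    ∃ l : B →ₗ[ℝ] ℝ, ∀ a, l (f a) = g a := by
  let g' : (A ⧸ LinearMap.ker f) →ₗ[ℝ] ℝ :=
    (LinearMap.ker f).liftQ g (fun a ha => hker a ha)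
  let e := f.quotKerEquivRange
  obtain ⟨l, hl⟩ := LinearMap.exists_extend (g' ∘ₗ e.symm.toLinearMap)
  refine ⟨l, fun a => ?_⟩
  have h1 : l (f a) = (g' ∘ₗ e.symm.toLinearMap) ⟨f a, LinearMap.mem_range_self f a⟩ := by
    rw [← hl]; rfl
  have h2 : e.symm ⟨f a, LinearMap.mem_range_self f a⟩ =
      Submodule.Quotient.mk a := by
    rw [LinearEquiv.symm_apply_eq]
    exact Subtype.ext (f.quotKerEquivRange_apply_mk a)
  rw [h1]
  simp only [LinearMap.comp_apply, LinearEquiv.coe_coe, h2]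
  rfl


lemma exists_dual_pair (c₁ : V₁ →ₗ[ℝ] W) (c₂ : V₂ →ₗ[ℝ] W) (s t : T →ₗ[ℝ] W)
    (α₁ : Module.Dual ℝ V₁) (α₂ : Module.Dual ℝ V₂)
    (hvan : ∀ (u₁ : V₁) (u₂ : V₂) (u₀ : T),
      c₁ u₁ = s u₀ → c₂ u₂ = t u₀ → α₁ u₁ + α₂ u₂ = 0) :
    ∃ ξ η : Module.Dual ℝ W, (∀ u₁, ξ (c₁ u₁) = α₁ u₁) ∧
      (∀ u₂, η (c₂ u₂) = α₂ u₂) ∧ (∀ u₀, ξ (s u₀) + η (t u₀) = 0) := by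
  set F : (V₁ × V₂ × T) →ₗ[ℝ] W × W :=
    LinearMap.prod
      (c₁ ∘ₗ LinearMap.fst ℝ V₁ (V₂ × T) +
        s ∘ₗ (LinearMap.snd ℝ V₂ T) ∘ₗ LinearMap.snd ℝ V₁ (V₂ × T))
      (c₂ ∘ₗ (LinearMap.fst ℝ V₂ T) ∘ₗ LinearMap.snd ℝ V₁ (V₂ × T) +
        t ∘ₗ (LinearMap.snd ℝ V₂ T) ∘ₗ LinearMap.snd ℝ V₁ (V₂ × T)) with hF
  set G : (V₁ × V₂ × T) →ₗ[ℝ] ℝ :=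
    α₁ ∘ₗ LinearMap.fst ℝ V₁ (V₂ × T) +
      α₂ ∘ₗ (LinearMap.fst ℝ V₂ T) ∘ₗ LinearMap.snd ℝ V₁ (V₂ × T) with hG
  have hker : ∀ a, F a = 0 → G a = 0 := by
    rintro ⟨u₁, u₂, u₀⟩ ha
    have h1 : c₁ u₁ + s u₀ = 0 := congrArg Prod.fst ha
    have h2 : c₂ u₂ + t u₀ = 0 := congrArg Prod.snd ha
    have h1' : c₁ u₁ = s (-u₀) := by rw [map_neg, eq_neg_iff_add_eq_zero]; exact h1
    have h2' : c₂ u₂ = t (-u₀) := by rw [map_neg, eq_neg_iff_add_eq_zero]; exact h2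
    show α₁ u₁ + α₂ u₂ = 0
    exact hvan u₁ u₂ (-u₀) h1' h2'
  obtain ⟨l, hl⟩ := dual_factor F G hker
  refine ⟨l ∘ₗ LinearMap.inl ℝ W W, l ∘ₗ LinearMap.inr ℝ W W, ?_, ?_, ?_⟩
  · intro u₁
    have h : l (c₁ u₁ + s 0, c₂ (0 : V₂) + t 0) = α₁ u₁ + α₂ 0 := hl (u₁, 0, 0)
    simpa using h
  · intro u₂
    have h : l (c₁ (0 : V₁) + s 0, c₂ u₂ + t 0) = α₁ 0 + α₂ u₂ := hl (0, u₂, 0)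
    simpa using h
  · intro u₀
    have h : l (c₁ (0 : V₁) + s u₀, c₂ (0 : V₂) + t u₀) = α₁ 0 + α₂ 0 :=
      hl (0, 0, u₀)
    simp only [map_zero, zero_add, add_zero] at h
    show l (s u₀, 0) + l (0, t u₀) = 0
    rw [← map_add, Prod.mk_add_mk, add_zero, zero_add, h]

/-- Exactness of `0 → U° → R° → M → S → 0` for the homotopy fibre product of
two 1-coisotropics (linear core of the smoothness criterion). -/
theorem homotopy_fibre_product_smoothness_exact_sequence
    [FiniteDimensional ℝ V₁] [FiniteDimensional ℝ V₂] [FiniteDimensional ℝ T]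
    [FiniteDimensional ℝ W]
    (c₁ : V₁ →ₗ[ℝ] W) (c₂ : V₂ →ₗ[ℝ] W) (s t : T →ₗ[ℝ] W)
    (L₁ : Submodule ℝ (V₁ × Module.Dual ℝ V₁)) (hL₁ : IsLagrangian L₁)
    (L₂ : Submodule ℝ (V₂ × Module.Dual ℝ V₂)) (hL₂ : IsLagrangian L₂) :
    -- "in particular": for (ξ,η) ∈ R°, (0,ξ∘c₁) ∈ L₁, (0,η∘c₂) ∈ L₂ and ξ∘s+η∘t = 0
    (∀ ξ η : Module.Dual ℝ W, memRann c₁ c₂ s t L₁ L₂ ξ η →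
      ((0 : V₁), ξ ∘ₗ c₁) ∈ L₁ ∧ ((0 : V₂), η ∘ₗ c₂) ∈ L₂ ∧
      ξ ∘ₗ s + η ∘ₗ t = 0) ∧
    -- the first map (inclusion) is well-defined: U° ⊆ R°
    (∀ ξ η : Module.Dual ℝ W, memUann c₁ c₂ s t ξ η →
      memRann c₁ c₂ s t L₁ L₂ ξ η) ∧
    -- exactness at R°: the kernel of the second map is U°
    (∀ ξ η : Module.Dual ℝ W, memRann c₁ c₂ s t L₁ L₂ ξ η →
      ((ξ ∘ₗ c₁ = 0 ∧ η ∘ₗ c₂ = 0) ↔ memUann c₁ c₂ s t ξ η)) ∧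
    -- exactness at M: the kernel of the third map is the image of the second
    (∀ (v₁ : V₁) (α₁ : Module.Dual ℝ V₁) (v₀ : T) (v₂ : V₂)
      (α₂ : Module.Dual ℝ V₂),
      (v₁, α₁) ∈ L₁ → (v₂, α₂) ∈ L₂ → c₁ v₁ = s v₀ → c₂ v₂ = t v₀ →
      ((v₁ = 0 ∧ v₀ = 0 ∧ v₂ = 0 ∧
          (α₁.coprod ((0 : Module.Dual ℝ T).coprod α₂)) ∘ₗ
            (fibV c₁ c₂ s t).subtype = 0) ↔
        ∃ ξ η : Module.Dual ℝ W, memRann c₁ c₂ s t L₁ L₂ ξ η ∧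
          v₁ = 0 ∧ α₁ = ξ ∘ₗ c₁ ∧ v₀ = 0 ∧ v₂ = 0 ∧ α₂ = η ∘ₗ c₂)) ∧
    -- the third map lands in S
    (∀ (v₁ : V₁) (α₁ : Module.Dual ℝ V₁) (v₀ : T) (v₂ : V₂)
      (α₂ : Module.Dual ℝ V₂),
      (v₁, α₁) ∈ L₁ → (v₂, α₂) ∈ L₂ →
      ∀ h : (v₁, (v₀, v₂)) ∈ fibV c₁ c₂ s t,
        memS c₁ c₂ s t L₁ L₂ ⟨(v₁, (v₀, v₂)), h⟩
          ((α₁.coprod ((0 : Module.Dual ℝ T).coprod α₂)) ∘ₗ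
            (fibV c₁ c₂ s t).subtype)) ∧
    -- exactness at S: the third map is surjective onto S
    (∀ (v : ↥(fibV c₁ c₂ s t)) (γ : Module.Dual ℝ ↥(fibV c₁ c₂ s t)),
      memS c₁ c₂ s t L₁ L₂ v γ →
      ∃ (v₁ : V₁) (α₁ : Module.Dual ℝ V₁) (v₀ : T) (v₂ : V₂)
        (α₂ : Module.Dual ℝ V₂),
        (v₁, α₁) ∈ L₁ ∧ (v₂, α₂) ∈ L₂ ∧
        (v : V₁ × T × V₂) = (v₁, (v₀, v₂)) ∧
        γ = (α₁.coprod ((0 : Module.Dual ℝ T).coprod α₂)) ∘ₗ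
          (fibV c₁ c₂ s t).subtype) := by
  have key : ∀ ξ η : Module.Dual ℝ W, memRann c₁ c₂ s t L₁ L₂ ξ η →
      ((0 : V₁), ξ ∘ₗ c₁) ∈ L₁ ∧ ((0 : V₂), η ∘ₗ c₂) ∈ L₂ ∧
        ξ ∘ₗ s + η ∘ₗ t = 0 := by
    intro ξ η hR
    have hz0₁ : ((0:V₁), (0:Module.Dual ℝ V₁)) ∈ L₁ := L₁.zero_mem
    have hz0₂ : ((0:V₂), (0:Module.Dual ℝ V₂)) ∈ L₂ := L₂.zero_mem
    have hz1 : ∀ y ∈ L₁, ξ (c₁ y.1) = 0 := by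
      intro y hy
      have := hR (c₁ y.1) 0 ⟨y.1, y.2, 0, 0, 0, hy, hz0₂, by simp, by simp⟩
      simpa using this
    have hz2 : ∀ y ∈ L₂, η (c₂ y.1) = 0 := by
      intro y hy
      have := hR 0 (c₂ y.1) ⟨0, 0, y.1, y.2, 0, hz0₁, hy, by simp, by simp⟩
      simpa using this
    have hst : ∀ v₀ : T, ξ (s v₀) + η (t v₀) = 0 := fun v₀ =>
      hR (s v₀) (t v₀) ⟨0, 0, 0, 0, v₀, hz0₁, hz0₂, by simp, by simp⟩
    refine ⟨(hL₁ _).mpr fun y hy => by simpa using hz1 y hy,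
            (hL₂ _).mpr fun y hy => by simpa using hz2 y hy,
            LinearMap.ext fun v₀ => by simpa using hst v₀⟩
  refine ⟨key, ?_, ?_, ?_, ?_, ?_⟩
  · -- U° ⊆ R°
    rintro ξ η hU w w' ⟨v₁, α₁, v₂, α₂, v₀, -, -, hw, hw'⟩
    exact hU w w' ⟨v₁, v₂, v₀, hw, hw'⟩
  · -- exactness at R°
    intro ξ η hR
    constructor
    · rintro ⟨h1, h2⟩ w w' ⟨v₁, v₂, v₀, rfl, rfl⟩
      have hst := (key ξ η hR).2.2
      have h1' : ξ (c₁ v₁) = 0 := by simpa using LinearMap.congr_fun h1 v₁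
      have h2' : η (c₂ v₂) = 0 := by simpa using LinearMap.congr_fun h2 v₂
      have h3' : ξ (s v₀) + η (t v₀) = 0 := by
        simpa using LinearMap.congr_fun hst v₀
      rw [map_add, map_add, h1', h2', zero_add, zero_add]
      exact h3'
    · intro hU
      constructor
      · ext u
        simpa using hU (c₁ u) 0 ⟨u, 0, 0, by simp, by simp⟩
      · ext u
        simpa using hU 0 (c₂ u) ⟨0, u, 0, by simp, by simp⟩
  · -- exactness at M
    intro v₁ α₁ v₀ v₂ α₂ h1 h2 hc1 hc2
    constructor
    · rintro ⟨rfl, rfl, rfl, hγ⟩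
      obtain ⟨ξ, η, hξ, hη, hst⟩ := exists_dual_pair c₁ c₂ s t α₁ α₂ (by
        intro u₁ u₂ u₀ e1 e2
        have hmem : ((u₁, (u₀, u₂)) : V₁ × T × V₂) ∈ fibV c₁ c₂ s t := ⟨e1, e2⟩
        have := LinearMap.congr_fun hγ ⟨(u₁, (u₀, u₂)), hmem⟩
        simpa using this)
      refine ⟨ξ, η, ?_, rfl, LinearMap.ext fun u => (hξ u).symm, rfl, rfl,
        LinearMap.ext fun u => (hη u).symm⟩
      rintro w w' ⟨u₁, β₁, u₂, β₂, u₀, m1, m2, rfl, rfl⟩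
      have ha1 : α₁ u₁ = 0 := by
        have := (hL₁ (0, α₁)).mp h1 (u₁, β₁) m1
        simpa using this
      have ha2 : α₂ u₂ = 0 := by
        have := (hL₂ (0, α₂)).mp h2 (u₂, β₂) m2
        simpa using this
      have e1 : ξ (c₁ u₁) = 0 := by rw [hξ u₁, ha1]
      have e2 : η (c₂ u₂) = 0 := by rw [hη u₂, ha2]
      rw [map_add, map_add, e1, e2, zero_add, zero_add]
      exact hst u₀
    · rintro ⟨ξ, η, hR, rfl, rfl, rfl, rfl, rfl⟩
      refine ⟨rfl, rfl, rfl, ?_⟩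
      obtain ⟨-, -, hst⟩ := key ξ η hR
      ext x
      obtain ⟨⟨u₁, u₀, u₂⟩, he1, he2⟩ := x
      simp only [LinearMap.comp_apply, LinearMap.coprod_apply,
        Submodule.coe_subtype, LinearMap.zero_apply, zero_add,
        LinearMap.zero_apply]
      rw [he1, he2]
      simpa using LinearMap.congr_fun hst u₀
  · -- third map lands in S
    intro v₁ α₁ v₀ v₂ α₂ h1 h2 h
    refine ⟨α₁, α₂, h1, h2, ?_⟩
    ext x
    obtain ⟨⟨u₁, u₀, u₂⟩, hx⟩ := x
    show α₁ u₁ + ((0 : Module.Dual ℝ T) u₀ + α₂ u₂) = α₁ u₁ + α₂ u₂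
    simp
  · -- surjectivity onto S
    rintro v γ ⟨α₁, α₂, h1, h2, rfl⟩
    refine ⟨(v : V₁ × T × V₂).1, α₁, (v : V₁ × T × V₂).2.1,
      (v : V₁ × T × V₂).2.2, α₂, h1, h2, rfl, ?_⟩
    ext x
    obtain ⟨⟨u₁, u₀, u₂⟩, hx⟩ := x
    show α₁ u₁ + α₂ u₂ = α₁ u₁ + ((0 : Module.Dual ℝ T) u₀ + α₂ u₂)
    simp
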